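/- Jensen estimate for the bending energy in polar coordinates: Let α ∈ (0, π/2), β ∈ (0, α), 0 < ε < 1, write e_φ = (cos φ, sin φ), and let v be of class C² on an open neighborhood of the closed set T = {s e_φ : ε ≤ s ≤ 1, −α+β ≤ φ ≤ α−β}. Then ∫_T |∇²v(x)|² dx ≥ (1/(2α)) ∫_ε^1 s^{−1} ( ∫_{−α+β}^{α−β} |∂_φ(∇v(s e_φ))| dφ )² ds, where |∇²v| is the Frobenius norm and ∂_φ(∇v(s e_φ)) = ∇²v(s e_φ) · (s e_φ⊥) is the derivative of φ ↦ ∇v(s e_φ). -/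

import Mathlib

open MeasureTheory Real Set Matrix
open scoped RealInnerProductSpace

noncomputable section

/-- The plane `ℝ²` with the Euclidean norm. -/
abbrev E2 : Type := EuclideanSpace ℝ (Fin 2)

/-- The vector `(a, b) ∈ ℝ²`. -/
def vec2 (a b : ℝ) : E2 := (EuclideanSpace.equiv (Fin 2) ℝ).symm ![a, b]

/-- The polar angle of `x`, valued in `(−π, π]`. -/
def eArg (x : E2) : ℝ := Complex.arg ⟨x 0, x 1⟩

/-- The rotation of `x` by `π/2`: `x^⊥ = (−x₂, x₁)`. -/
def perp (x : E2) : E2 := vec2 (-(x 1)) (x 0)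

/-- The `i`-th partial derivative. -/
def pd (i : Fin 2) (f : E2 → ℝ) (x : E2) : ℝ := fderiv ℝ f x (EuclideanSpace.single i 1)

/-- The gradient, as a vector in `ℝ²`. -/
def grad2 (f : E2 → ℝ) (x : E2) : E2 := vec2 (pd 0 f x) (pd 1 f x)

/-- The Hessian matrix `(∂ᵢ∂ⱼ f)`. -/
def hess (f : E2 → ℝ) (x : E2) : Matrix (Fin 2) (Fin 2) ℝ :=
  Matrix.of fun i j => pd i (pd j f) x

/-- The Jacobian matrix `(∂ⱼ uᵢ)` of a map `u : ℝ² → ℝ²`. -/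
def jac (u : E2 → E2) (x : E2) : Matrix (Fin 2) (Fin 2) ℝ :=
  Matrix.of fun i j => fderiv ℝ u x (EuclideanSpace.single j 1) i

/-- The outer product `a ⊗ b` of two vectors in `ℝ²`. -/
def outo (a b : E2) : Matrix (Fin 2) (Fin 2) ℝ := Matrix.of fun i j => a i * b j

/-- The squared Frobenius norm of a `2 × 2` matrix. -/
def frob2 (M : Matrix (Fin 2) (Fin 2) ℝ) : ℝ := ∑ i, ∑ j, (M i j) ^ 2

/-- The membrane strain `∇u + ∇uᵀ + ∇v ⊗ ∇v`. -/
def strain (u : E2 → E2) (v : E2 → ℝ) (x : E2) : Matrix (Fin 2) (Fin 2) ℝ :=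
  jac u x + (jac u x)ᵀ + outo (grad2 v x) (grad2 v x)

/-- The open sector `S` of opening angle `2α` inside the unit disc. -/
def sector (α : ℝ) : Set E2 :=
  {x | ∃ r φ : ℝ, 0 < r ∧ r < 1 ∧ -α < φ ∧ φ < α ∧ x = r • vec2 (Real.cos φ) (Real.sin φ)}

/-- The curved part `Γ` of the boundary of the sector. -/
def GammaS (α : ℝ) : Set E2 := closure (sector α) ∩ Metric.sphere (0 : E2) 1

/-- The scaled sector `2S`. -/
def twoS (α : ℝ) : Set E2 := (fun x : E2 => (2 : ℝ) • x) '' sector α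

/-- The in-plane displacement `u₀(x) = ½ (arg x · x^⊥ − x)` of the conical deformation. -/
def coneU (x : E2) : E2 := (2⁻¹ : ℝ) • (eArg x • perp x - x)

/-- The Föppl–von-Kármán energy `E_h(u,v)`. -/
def FvK (α h : ℝ) (u : E2 → E2) (v : E2 → ℝ) : ℝ :=
  ∫ x in sector α, (frob2 (strain u v x) + h ^ 2 * frob2 (hess v x))

/-- The admissible class `𝒜`: `u ∈ W^{1,2}(S;ℝ²)`, `v ∈ W^{2,2}(S)` convex, with the
boundary conditions `v = 1`, `∇v(x) = x`, `u(x) = ½(arg x · x^⊥ − x)` on `Γ`. -/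
structure Admissible (α : ℝ) (u : E2 → E2) (v : E2 → ℝ) : Prop where
  u_aediff : ∀ᵐ x ∂(volume.restrict (sector α)), DifferentiableAt ℝ u x
  u_L2 : IntegrableOn (fun x => ‖u x‖ ^ 2) (sector α)
  uD_L2 : IntegrableOn (fun x => frob2 (jac u x)) (sector α)
  v_convex : ConvexOn ℝ (sector α) v
  v_aediff : ∀ᵐ x ∂(volume.restrict (sector α)),
      DifferentiableAt ℝ v x ∧ ∀ i, DifferentiableAt ℝ (pd i v) x
  v_L2 : IntegrableOn (fun x => (v x) ^ 2) (sector α)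
  vD_L2 : IntegrableOn (fun x => ‖grad2 v x‖ ^ 2) (sector α)
  vD2_L2 : IntegrableOn (fun x => frob2 (hess v x)) (sector α)
  bc_v : ∀ x ∈ GammaS α, v x = 1
  bc_dv : ∀ x ∈ GammaS α, grad2 v x = x
  bc_u : ∀ x ∈ GammaS α, u x = coneU x

/-- The closed truncated sector `T = {s e_ψ : ε ≤ s ≤ 1, −α+β ≤ ψ ≤ α−β}`. -/
def Tset (α β ε : ℝ) : Set E2 :=
  {x | ∃ s ψ : ℝ, ε ≤ s ∧ s ≤ 1 ∧ -α + β ≤ ψ ∧ ψ ≤ α - β ∧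
    x = s • vec2 (Real.cos ψ) (Real.sin ψ)}

/-- The Euclidean norm of a vector in `Fin 2 → ℝ`. -/
def evnorm (w : Fin 2 → ℝ) : ℝ := Real.sqrt (∑ i, (w i) ^ 2)


/-! In polar coordinates `x = s e_ψ` the area element is `s ds dψ`, so
`∫_T |∇²v|² = ∫_ε^1 ∫ s |∇²v(s e_ψ)|² dψ ds`. On each circle, Jensen's inequality on an angular
interval of length `2α - 2β ≤ 2α` together with `|∇²v(s e_ψ) (s e_ψ^⊥)|² ≤ s² |∇²v(s e_ψ)|²`
bounds `s⁻¹ (∫ |∂_ψ ∇v(s e_ψ)| dψ)²` by `2α ∫ s |∇²v(s e_ψ)|² dψ`; integrating in `s` finishes. -/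

theorem sq_integral_le_measureReal_mul_integral_sq {X : Type*} [MeasurableSpace X]
    {μ : Measure X} [IsFiniteMeasure μ] {f : X → ℝ} (hf : Integrable f μ)
    (hf2 : Integrable (fun x => f x ^ 2) μ) :
    (∫ x, f x ∂μ) ^ 2 ≤ μ.real univ * ∫ x, f x ^ 2 ∂μ := by
  rcases eq_zero_or_neZero μ with rfl | hμ
  · simp
  have hjensen : (⨍ x, f x ∂μ) ^ 2 ≤ ⨍ x, f x ^ 2 ∂μ :=
    (Even.convexOn_pow even_two).map_average_le (continuous_pow 2).continuousOn isClosed_univ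
      (by simp) hf hf2
  have hpos : 0 < μ.real univ := by simp [measureReal_def, ENNReal.toReal_pos_iff, hμ.out]
  rw [average_eq, average_eq, smul_eq_mul, smul_eq_mul, mul_pow] at hjensen
  set c := μ.real univ
  calc (∫ x, f x ∂μ) ^ 2 = c ^ 2 * (c⁻¹ ^ 2 * (∫ x, f x ∂μ) ^ 2) := by field_simp
    _ ≤ c ^ 2 * (c⁻¹ * ∫ x, f x ^ 2 ∂μ) := by gcongr
    _ = c * ∫ x, f x ^ 2 ∂μ := by field_simp

theorem sq_intervalIntegral_le {f : ℝ → ℝ} {a b : ℝ} (hab : a ≤ b)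
    (hf : IntervalIntegrable f volume a b)
    (hf2 : IntervalIntegrable (fun x => f x ^ 2) volume a b) :
    (∫ x in a..b, f x) ^ 2 ≤ (b - a) * ∫ x in a..b, f x ^ 2 := by
  have : IsFiniteMeasure (volume.restrict (Ioc a b)) :=
    isFiniteMeasure_restrict.2 measure_Ioc_lt_top.ne
  rw [intervalIntegrable_iff_integrableOn_Ioc_of_le hab] at hf hf2
  simp only [intervalIntegral.integral_of_le hab]
  convert sq_integral_le_measureReal_mul_integral_sq hf hf2 using 2
  simp [measureReal_def, hab]

theorem intervalIntegral_mono_on_of_nonneg {f g : ℝ → ℝ} {a b : ℝ} (hab : a ≤ b)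
    (hf : ∀ x ∈ Ioc a b, 0 ≤ f x) (hg : IntervalIntegrable g volume a b)
    (hfg : ∀ x ∈ Ioc a b, f x ≤ g x) :
    ∫ x in a..b, f x ≤ ∫ x in a..b, g x := by
  rw [intervalIntegral.integral_of_le hab, intervalIntegral.integral_of_le hab]
  exact integral_mono_of_nonneg ((ae_restrict_iff' measurableSet_Ioc).2 (ae_of_all _ hf)) hg.1
    ((ae_restrict_iff' measurableSet_Ioc).2 (ae_of_all _ hfg))

theorem frob2_nonneg (M : Matrix (Fin 2) (Fin 2) ℝ) : 0 ≤ frob2 M := by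
  unfold frob2
  positivity

theorem evnorm_mulVec_sq_le (M : Matrix (Fin 2) (Fin 2) ℝ) (w : Fin 2 → ℝ) :
    evnorm (M *ᵥ w) ^ 2 ≤ frob2 M * evnorm w ^ 2 := by
  rw [evnorm, evnorm, Real.sq_sqrt (by positivity), Real.sq_sqrt (by positivity), frob2,
    Finset.sum_mul]
  exact Finset.sum_le_sum fun i _ => Finset.sum_mul_sq_le_sq_mul_sq Finset.univ (M i) w

theorem evnorm_smul_perp_sq (s ψ : ℝ) : evnorm (s • ![-sin ψ, cos ψ]) ^ 2 = s ^ 2 := by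
  rw [evnorm, Real.sq_sqrt (by positivity)]
  simp [mul_pow, ← mul_add, sin_sq_add_cos_sq]

theorem evnorm_mulVec_smul_perp_sq_le (M : Matrix (Fin 2) (Fin 2) ℝ) (s ψ : ℝ) :
    evnorm (M *ᵥ (s • ![-sin ψ, cos ψ])) ^ 2 ≤ s ^ 2 * frob2 M := by
  have h := evnorm_mulVec_sq_le M (s • ![-sin ψ, cos ψ])
  rwa [evnorm_smul_perp_sq, mul_comm] at h

theorem continuous_frob2 : Continuous frob2 := by
  unfold frob2
  fun_prop

theorem continuous_evnorm : Continuous evnorm := by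
  unfold evnorm
  fun_prop

theorem continuous_smul_perp (s : ℝ) : Continuous fun ψ : ℝ => s • ![-sin ψ, cos ψ] := by
  have h : Continuous fun ψ : ℝ => ![-sin ψ, cos ψ] := by
    refine continuous_pi fun i => ?_
    fin_cases i
    · exact continuous_sin.neg
    · exact continuous_cos
  exact h.const_smul s

theorem continuousOn_hess {v : E2 → ℝ} {U : Set E2} (hU : IsOpen U) (hv : ContDiffOn ℝ 2 v U) :
    ContinuousOn (hess v) U := by
  refine continuousOn_pi.2 fun i => continuousOn_pi.2 fun j => ?_
  have hpd : ContDiffOn ℝ 1 (pd j v) U :=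
    (hv.fderiv_of_isOpen hU (by norm_num)).clm_apply contDiffOn_const
  exact (hpd.continuousOn_fderiv_of_isOpen hU le_rfl).clm_apply continuousOn_const

theorem inv_mul_sq_integral_evnorm_mulVec_perp_le {M : ℝ → Matrix (Fin 2) (Fin 2) ℝ}
    {a b s L : ℝ} (hab : a ≤ b) (hL : b - a ≤ L) (hs : 0 < s) (hM : ContinuousOn M (Icc a b)) :
    s⁻¹ * (∫ ψ in a..b, evnorm (M ψ *ᵥ (s • ![-sin ψ, cos ψ]))) ^ 2
      ≤ L * ∫ ψ in a..b, s * frob2 (M ψ) := by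
  rw [← uIcc_of_le hab] at hM
  have hG : ContinuousOn (fun ψ => evnorm (M ψ *ᵥ (s • ![-sin ψ, cos ψ]))) (uIcc a b) :=
    continuous_evnorm.comp_continuousOn
      ((continuous_fst.matrix_mulVec continuous_snd).comp_continuousOn
        (hM.prodMk (continuous_smul_perp s).continuousOn))
  have hF : ContinuousOn (fun ψ => frob2 (M ψ)) (uIcc a b) :=
    continuous_frob2.comp_continuousOn hM
  have hF0 : 0 ≤ ∫ ψ in a..b, s * frob2 (M ψ) :=
    intervalIntegral.integral_nonneg hab fun ψ _ => mul_nonneg hs.le (frob2_nonneg _)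
  calc s⁻¹ * (∫ ψ in a..b, evnorm (M ψ *ᵥ (s • ![-sin ψ, cos ψ]))) ^ 2
      ≤ s⁻¹ * ((b - a) * ∫ ψ in a..b, evnorm (M ψ *ᵥ (s • ![-sin ψ, cos ψ])) ^ 2) := by
        gcongr
        exact sq_intervalIntegral_le hab hG.intervalIntegrable (hG.pow 2).intervalIntegrable
    _ ≤ s⁻¹ * ((b - a) * ∫ ψ in a..b, s ^ 2 * frob2 (M ψ)) := by
        gcongr
        exact intervalIntegral.integral_mono_on hab (hG.pow 2).intervalIntegrable
          (hF.const_smul (s ^ 2)).intervalIntegrable fun ψ _ =>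
            evnorm_mulVec_smul_perp_sq_le (M ψ) s ψ
    _ = (b - a) * ∫ ψ in a..b, s * frob2 (M ψ) := by
        simp only [intervalIntegral.integral_const_mul]
        field_simp
    _ ≤ L * ∫ ψ in a..b, s * frob2 (M ψ) := by gcongr

def polarE2 (p : ℝ × ℝ) : E2 := p.1 • vec2 (cos p.2) (sin p.2)

def prodEquivE2 : ℝ × ℝ ≃ᵐ E2 :=
  MeasurableEquiv.finTwoArrow.symm.trans (MeasurableEquiv.toLp 2 (Fin 2 → ℝ))

theorem measurePreserving_prodEquivE2 : MeasurePreserving prodEquivE2 :=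
  ((EuclideanSpace.volume_preserving_symm_measurableEquiv_toLp (Fin 2)).symm _).comp
    ((volume_preserving_finTwoArrow ℝ).symm _)

theorem polarE2_eq_comp : polarE2 = prodEquivE2 ∘ polarCoord.symm := by
  ext p i
  fin_cases i <;> simp [polarE2, prodEquivE2, vec2, polarCoord_symm_apply]

theorem continuous_polarE2 : Continuous polarE2 := by
  have hvec2 : Continuous fun q : ℝ × ℝ => vec2 q.1 q.2 := by
    refine (PiLp.continuous_toLp 2 _).comp (continuous_pi fun i => ?_)
    fin_cases i
    · exact continuous_fst
    · exact continuous_snd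
  exact continuous_fst.smul
    (hvec2.comp (f := fun p : ℝ × ℝ => (cos p.2, sin p.2)) (by fun_prop))

theorem setIntegral_image_polarE2 {F : Type*} [NormedAddCommGroup F] [NormedSpace ℝ F]
    {S : Set (ℝ × ℝ)} (hS : MeasurableSet S) (hST : S ⊆ polarCoord.target) (f : E2 → F) :
    ∫ x in polarE2 '' S, f x = ∫ p in S, p.1 • f (polarE2 p) := by
  rw [polarE2_eq_comp, image_comp, measurePreserving_prodEquivE2.setIntegral_image_emb
      prodEquivE2.measurableEmbedding,
    integral_image_eq_integral_abs_det_fderiv_smul volume hS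
      (fun p _ => (hasFDerivAt_polarCoord_symm p).hasFDerivWithinAt)
      (polarCoord.symm.injOn.mono hST)]
  refine setIntegral_congr_fun hS fun p hp => ?_
  rw [det_fderivPolarCoordSymm, abs_of_pos (hST hp).1]
  rfl

theorem Tset_eq_image_polarE2 (α β ε : ℝ) :
    Tset α β ε = polarE2 '' (Icc ε 1 ×ˢ Icc (-α + β) (α - β)) := by
  ext x
  constructor
  · rintro ⟨s, ψ, h1, h2, h3, h4, rfl⟩
    exact ⟨(s, ψ), ⟨⟨h1, h2⟩, h3, h4⟩, rfl⟩
  · rintro ⟨⟨s, ψ⟩, ⟨⟨h1, h2⟩, h3, h4⟩, rfl⟩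
    exact ⟨s, ψ, h1, h2, h3, h4, rfl⟩

theorem Icc_prod_Icc_subset_polarCoord_target {ε r c d : ℝ} (hε : 0 < ε) (hc : -π < c)
    (hd : d < π) : Icc ε r ×ˢ Icc c d ⊆ polarCoord.target := by
  rw [polarCoord_target]
  exact prod_mono (fun s hs => hε.trans_le hs.1) fun ψ hψ => ⟨hc.trans_le hψ.1, hψ.2.trans_lt hd⟩

theorem integrable_Ioc_prod_Ioc_of_integrableOn_Icc {f : ℝ × ℝ → ℝ} {a b c d : ℝ}
    (hf : IntegrableOn f (Icc a b ×ˢ Icc c d)) :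
    Integrable f ((volume.restrict (Ioc a b)).prod (volume.restrict (Ioc c d))) := by
  rw [Measure.prod_restrict, ← Measure.volume_eq_prod]
  exact hf.mono_set (prod_mono Ioc_subset_Icc_self Ioc_subset_Icc_self)

theorem intervalIntegrable_intervalIntegral_of_integrableOn {f : ℝ × ℝ → ℝ} {a b c d : ℝ}
    (hab : a ≤ b) (hcd : c ≤ d) (hf : IntegrableOn f (Icc a b ×ˢ Icc c d)) :
    IntervalIntegrable (fun x => ∫ y in c..d, f (x, y)) volume a b := by
  rw [intervalIntegrable_iff_integrableOn_Ioc_of_le hab]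
  simp only [intervalIntegral.integral_of_le hcd]
  exact (integrable_Ioc_prod_Ioc_of_integrableOn_Icc hf).integral_prod_left

theorem setIntegral_Icc_prod_Icc {f : ℝ × ℝ → ℝ} {a b c d : ℝ} (hab : a ≤ b) (hcd : c ≤ d)
    (hf : IntegrableOn f (Icc a b ×ˢ Icc c d)) :
    ∫ p in Icc a b ×ˢ Icc c d, f p = ∫ x in a..b, ∫ y in c..d, f (x, y) := by
  rw [Measure.volume_eq_prod, setIntegral_prod _ hf, integral_Icc_eq_integral_Ioc,
    intervalIntegral.integral_of_le hab]
  refine setIntegral_congr_fun measurableSet_Ioc fun x _ => ?_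
  rw [integral_Icc_eq_integral_Ioc, intervalIntegral.integral_of_le hcd]

/-- **Jensen estimate for the bending energy in polar coordinates**: for `v` of class `C²` on a
neighborhood of `T`,
`∫_T |∇²v|² dx ≥ (1/(2α)) ∫_ε^1 s⁻¹ (∫_{−α+β}^{α−β} |∂_ψ (∇v(s e_ψ))| dψ)² ds`,
where `∂_ψ(∇v(s e_ψ)) = ∇²v(s e_ψ)·(s e_ψ^⊥)`. -/
theorem jensen_polar_bending (α β ε : ℝ) (hα : α ∈ Set.Ioo 0 (π / 2))
    (hβ : β ∈ Set.Ioo 0 α) (hε : 0 < ε) (hε1 : ε < 1)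
    (v : E2 → ℝ) (U : Set E2) (hU : IsOpen U) (hTU : Tset α β ε ⊆ U)
    (hv : ContDiffOn ℝ 2 v U) :
    (1 / (2 * α)) * ∫ s in ε..(1:ℝ), s⁻¹ *
        (∫ ψ in (-α + β)..(α - β),
          evnorm ((hess v (s • vec2 (Real.cos ψ) (Real.sin ψ))).mulVec
            (s • ![-(Real.sin ψ), Real.cos ψ]))) ^ 2
      ≤ ∫ x in Tset α β ε, frob2 (hess v x) := by
  obtain ⟨hα0, hαπ⟩ := hα
  obtain ⟨hβ0, hβα⟩ := hβ
  have hab : -α + β ≤ α - β := by linarith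
  set R := Icc ε 1 ×ˢ Icc (-α + β) (α - β)
  have hRU : MapsTo polarE2 R U := fun p hp =>
    hTU (Tset_eq_image_polarE2 α β ε ▸ mem_image_of_mem polarE2 hp)
  have hHess : ContinuousOn (fun p => hess v (polarE2 p)) R :=
    (continuousOn_hess hU hv).comp continuous_polarE2.continuousOn hRU
  have hint : IntegrableOn (fun p : ℝ × ℝ => p.1 * frob2 (hess v (polarE2 p))) R :=
    (continuous_fst.continuousOn.mul (continuous_frob2.comp_continuousOn hHess))
      |>.integrableOn_compact (isCompact_Icc.prod isCompact_Icc)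
  have hslice : ∀ s ∈ Ioc ε 1,
      s⁻¹ * (∫ ψ in (-α + β)..(α - β),
          evnorm (hess v (polarE2 (s, ψ)) *ᵥ (s • ![-sin ψ, cos ψ]))) ^ 2
        ≤ 2 * α * ∫ ψ in (-α + β)..(α - β), s * frob2 (hess v (polarE2 (s, ψ))) :=
    fun s hs => inv_mul_sq_integral_evnorm_mulVec_perp_le hab (by linarith) (hε.trans hs.1)
      (hHess.comp (Continuous.prodMk_right s).continuousOn fun ψ hψ => ⟨⟨hs.1.le, hs.2⟩, hψ⟩)
  calc _ ≤ (1 / (2 * α)) * ∫ s in ε..(1:ℝ), 2 * α * ∫ ψ in (-α + β)..(α - β),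
          s * frob2 (hess v (polarE2 (s, ψ))) := by
        gcongr
        exact intervalIntegral_mono_on_of_nonneg hε1.le
          (fun s hs => by have := (hε.trans hs.1).le; positivity)
          ((intervalIntegrable_intervalIntegral_of_integrableOn hε1.le hab hint).const_mul _)
          hslice
    _ = ∫ s in ε..(1:ℝ), ∫ ψ in (-α + β)..(α - β), s * frob2 (hess v (polarE2 (s, ψ))) := by
        rw [intervalIntegral.integral_const_mul]
        field_simp
    _ = ∫ x in Tset α β ε, frob2 (hess v x) := by
        rw [Tset_eq_image_polarE2,
          setIntegral_image_polarE2 (measurableSet_Icc.prod measurableSet_Icc)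
            (Icc_prod_Icc_subset_polarCoord_target hε (by linarith) (by linarith))]
        simp only [smul_eq_mul]
        rw [setIntegral_Icc_prod_Icc hε1.le hab hint]
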